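/- Let ε ∼ N(0, Σ) with Σ positive semidefinite of rank r, and let Ψ be positive semidefinite with Σ ⪰ Ψ and Ψ⁺ ⪰ Σ⁺. Define the random variable γ ∈ {0,1} with conditional probability P(γ = 0 | ε = x) = exp(−½ xᵀ(Ψ⁺ − Σ⁺)x). Then the conditional distribution of ε given γ = 0 is N(0, Ψ), i.e., the density of ε restricted by the weight exp(−½ xᵀ(Ψ⁺ − Σ⁺)x) and renormalized equals the N(0, Ψ) density on the common support. -/

import Mathlib

open Matrix MeasureTheory

/-- `B` is the Moore–Penrose pseudoinverse of `A`. -/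
def IsMoorePenroseInv {n : ℕ} (A B : Matrix (Fin n) (Fin n) ℝ) : Prop :=
  A * B * A = A ∧ B * A * B = B ∧ (A * B)ᵀ = A * B ∧ (B * A)ᵀ = B * A

/-- Pseudo-determinant of a symmetric real matrix: the product of its nonzero eigenvalues. -/
noncomputable def pdet {n : ℕ} (A : Matrix (Fin n) (Fin n) ℝ) (hA : A.IsHermitian) : ℝ :=
  ∏ i ∈ Finset.univ.filter (fun i => hA.eigenvalues i ≠ 0), hA.eigenvalues i

/-- Density of `N(0, S)` on its support, where `Sp = S⁺`, `r = rank S`, `pd = pdet S`: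
`x ↦ (2π)^{−r/2} pd^{−1/2} exp(−½ xᵀ S⁺ x)`. -/
noncomputable def gaussPdf {n : ℕ} (Sp : Matrix (Fin n) (Fin n) ℝ) (r : ℕ) (pd : ℝ)
    (x : Fin n → ℝ) : ℝ :=
  (2 * Real.pi) ^ (-(r : ℝ) / 2) * pd ^ (-(1 : ℝ) / 2) *
    Real.exp (-(1/2) * (x ⬝ᵥ Sp.mulVec x))

/-!
Since `Σ ⪰ Ψ ⪰ 0`, every null vector of `Σ` is one of `Ψ`, so `rank Ψ ≤ rank Σ`; the same argument
applied to `Ψ⁺ ⪰ Σ⁺ ⪰ 0` gives `rank Σ = rank Σ⁺ ≤ rank Ψ⁺ = rank Ψ`. Hence both densities carry the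
same factor `(2π)^{−r/2}`, and the identity reduces to `exp(−½ xᵀΣ⁺x) · exp(−½ xᵀ(Ψ⁺ − Σ⁺)x) =
exp(−½ xᵀΨ⁺x)` together with `pdet Σ^{−1/2} = √(pdet Ψ / pdet Σ) · pdet Ψ^{−1/2}`.
-/

theorem LinearMap.finrank_range_le_of_ker_le {K V W : Type*} [DivisionRing K] [AddCommGroup V]
    [Module K V] [FiniteDimensional K V] [AddCommGroup W] [Module K W] {f g : V →ₗ[K] W}
    (h : LinearMap.ker f ≤ LinearMap.ker g) :
    Module.finrank K (LinearMap.range g) ≤ Module.finrank K (LinearMap.range f) := by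
  have := Submodule.finrank_mono h
  have := f.finrank_range_add_finrank_ker
  have := g.finrank_range_add_finrank_ker
  omega

namespace Matrix.PosSemidef

open scoped ComplexOrder

variable {ι 𝕜 : Type*} [Fintype ι] [RCLike 𝕜] {A B : Matrix ι ι 𝕜}

theorem ker_mulVecLin_le_of_sub (hB : B.PosSemidef) (hAB : (A - B).PosSemidef) :
    LinearMap.ker A.mulVecLin ≤ LinearMap.ker B.mulVecLin := by
  intro v hv
  rw [LinearMap.mem_ker, mulVecLin_apply] at hv ⊢
  have hsub := hAB.dotProduct_mulVec_nonneg v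
  rw [sub_mulVec, dotProduct_sub, hv, dotProduct_zero, zero_sub, neg_nonneg] at hsub
  exact (hB.dotProduct_mulVec_zero_iff v).mp (le_antisymm hsub (hB.dotProduct_mulVec_nonneg v))

theorem rank_le_of_sub (hB : B.PosSemidef) (hAB : (A - B).PosSemidef) : B.rank ≤ A.rank :=
  LinearMap.finrank_range_le_of_ker_le (hB.ker_mulVecLin_le_of_sub hAB)

end Matrix.PosSemidef

namespace IsMoorePenroseInv

variable {n : ℕ} {A B C : Matrix (Fin n) (Fin n) ℝ}

theorem symm (h : IsMoorePenroseInv A B) : IsMoorePenroseInv B A :=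
  ⟨h.2.1, h.1, h.2.2.2, h.2.2.1⟩

theorem transpose (h : IsMoorePenroseInv A B) : IsMoorePenroseInv Aᵀ Bᵀ := by
  obtain ⟨h₁, h₂, h₃, h₄⟩ := h
  refine ⟨?_, ?_, ?_, ?_⟩
  · rw [← transpose_mul, ← transpose_mul, ← Matrix.mul_assoc, h₁]
  · rw [← transpose_mul, ← transpose_mul, ← Matrix.mul_assoc, h₂]
  · rw [← transpose_mul, transpose_transpose, h₄]
  · rw [← transpose_mul, transpose_transpose, h₃]

theorem mul_eq_mul (hB : IsMoorePenroseInv A B) (hC : IsMoorePenroseInv A C) : A * B = A * C :=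
  calc A * B = (A * B)ᵀ := hB.2.2.1.symm
    _ = (A * C * A * B)ᵀ := by rw [hC.1]
    _ = (A * B)ᵀ * (A * C)ᵀ := by simp only [transpose_mul, Matrix.mul_assoc]
    _ = A * B * A * C := by rw [hB.2.2.1, hC.2.2.1, ← Matrix.mul_assoc]
    _ = A * C := by rw [hB.1]

theorem unique (hB : IsMoorePenroseInv A B) (hC : IsMoorePenroseInv A C) : B = C := by
  have hBA : B * A = C * A := by
    simpa only [← transpose_mul, transpose_inj] using hB.transpose.mul_eq_mul hC.transpose
  calc B = B * A * B := hB.2.1.symm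
    _ = C * (A * B) := by rw [hBA, Matrix.mul_assoc]
    _ = C := by rw [hB.mul_eq_mul hC, ← Matrix.mul_assoc, hC.2.1]

theorem transpose_eq (hA : Aᵀ = A) (h : IsMoorePenroseInv A B) : Bᵀ = B :=
  (hA ▸ h.transpose).unique h

theorem posSemidef (hA : A.PosSemidef) (h : IsMoorePenroseInv A B) : B.PosSemidef := by
  have hBsymm : Bᴴ = B := by
    rw [conjTranspose_eq_transpose_of_trivial]
    refine h.transpose_eq ?_
    simpa only [conjTranspose_eq_transpose_of_trivial] using hA.isHermitian.eq
  simpa only [hBsymm, h.2.1] using hA.conjTranspose_mul_mul_same B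

theorem rank_le (h : IsMoorePenroseInv A B) : A.rank ≤ B.rank :=
  calc A.rank = (A * B * A).rank := by rw [h.1]
    _ ≤ (A * B).rank := rank_mul_le_left _ _
    _ ≤ B.rank := rank_mul_le_right _ _

theorem rank_eq (h : IsMoorePenroseInv A B) : A.rank = B.rank :=
  le_antisymm h.rank_le h.symm.rank_le

end IsMoorePenroseInv

theorem pdet_pos {n : ℕ} {A : Matrix (Fin n) (Fin n) ℝ} (hA : A.PosSemidef) :
    0 < pdet A hA.isHermitian :=
  Finset.prod_pos fun i hi ↦
    (hA.eigenvalues_nonneg i).lt_of_ne (Finset.mem_filter.mp hi).2.symm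

theorem gaussPdf_mul_exp_sub {n : ℕ} (Sp Pp : Matrix (Fin n) (Fin n) ℝ) (r : ℕ) {pS pP : ℝ}
    (hpS : 0 < pS) (hpP : 0 < pP) (x : Fin n → ℝ) :
    gaussPdf Sp r pS x * Real.exp (-(1/2) * (x ⬝ᵥ (Pp - Sp) *ᵥ x))
      = Real.sqrt (pP / pS) * gaussPdf Pp r pP x := by
  have rpow_eq_inv_sqrt : ∀ {p : ℝ}, 0 < p → p ^ (-(1 : ℝ) / 2) = (Real.sqrt p)⁻¹ := fun hp ↦ by
    rw [Real.sqrt_eq_rpow, ← Real.rpow_neg hp.le, neg_div]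
  have hexp : Real.exp (-(1/2) * (x ⬝ᵥ Sp *ᵥ x)) * Real.exp (-(1/2) * (x ⬝ᵥ (Pp - Sp) *ᵥ x))
      = Real.exp (-(1/2) * (x ⬝ᵥ Pp *ᵥ x)) := by
    rw [← Real.exp_add, sub_mulVec, dotProduct_sub]
    ring_nf
  have hsS := Real.sqrt_pos.mpr hpS
  have hsP := Real.sqrt_pos.mpr hpP
  unfold gaussPdf
  rw [rpow_eq_inv_sqrt hpS, rpow_eq_inv_sqrt hpP, Real.sqrt_div hpP.le, mul_assoc, hexp]
  field_simp

theorem stmt_9_general {n : ℕ} (Sig Psi Sigp Psip : Matrix (Fin n) (Fin n) ℝ)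
    (hSig : Sig.PosSemidef) (hPsi : Psi.PosSemidef)
    (hSigp : IsMoorePenroseInv Sig Sigp) (hPsip : IsMoorePenroseInv Psi Psip)
    (hge : (Sig - Psi).PosSemidef) (hgep : (Psip - Sigp).PosSemidef)
    (x : Fin n → ℝ) :
    gaussPdf Sigp Sig.rank (pdet Sig hSig.isHermitian) x *
        Real.exp (-(1/2) * (x ⬝ᵥ (Psip - Sigp).mulVec x))
      = Real.sqrt (pdet Psi hPsi.isHermitian / pdet Sig hSig.isHermitian) *
          gaussPdf Psip Psi.rank (pdet Psi hPsi.isHermitian) x := by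
  have hrank : Sig.rank = Psi.rank := by
    refine le_antisymm ?_ (hPsi.rank_le_of_sub hge)
    calc Sig.rank = Sigp.rank := hSigp.rank_eq
      _ ≤ Psip.rank := (hSigp.posSemidef hSig).rank_le_of_sub hgep
      _ = Psi.rank := hPsip.rank_eq.symm
  rw [hrank]
  exact gaussPdf_mul_exp_sub Sigp Psip Psi.rank (pdet_pos hSig) (pdet_pos hPsi) x

/-- Gaussianity preservation: reweighting the `N(0,Σ)` density by
`exp(−½ xᵀ(Ψ⁺−Σ⁺)x)` gives, up to the normalizing constant `√(pdet Ψ/pdet Σ)`,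
the `N(0,Ψ)` density on the common support. -/
theorem stmt_9 {n : ℕ} (Sig Psi Sigp Psip : Matrix (Fin n) (Fin n) ℝ)
    (hSig : Sig.PosSemidef) (hPsi : Psi.PosSemidef)
    (hSigp : IsMoorePenroseInv Sig Sigp) (hPsip : IsMoorePenroseInv Psi Psip)
    (hge : (Sig - Psi).PosSemidef) (hgep : (Psip - Sigp).PosSemidef)
    (x : Fin n → ℝ) (hx : x ∈ LinearMap.range Sig.mulVecLin) :
    gaussPdf Sigp Sig.rank (pdet Sig hSig.isHermitian) x *
        Real.exp (-(1/2) * (x ⬝ᵥ (Psip - Sigp).mulVec x))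
      = Real.sqrt (pdet Psi hPsi.isHermitian / pdet Sig hSig.isHermitian) *
          gaussPdf Psip Psi.rank (pdet Psi hPsi.isHermitian) x :=
  stmt_9_general Sig Psi Sigp Psip hSig hPsi hSigp hPsip hge hgep x
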